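/- arXiv:0704.0906 — 3 statements merged into one kernel-verified Lean document; each statement's English description precedes it below -/
import Mathlib

section
/- Let P_n be a birth and death chain on Ω_n = {1,...,n}, reversible with respect to a probability p_n. Suppose there exist constants A > 0, q > 0, B > 0 and an integer k such that P_n(i,i+1) ≥ A n^{-q} and P_n(i,i−1) ≥ A n^{-q} for all interior i, P_n(1,2) ≥ A n^{-q}, P_n(n,n−1) ≥ A n^{-q}, and p_n(i) ≤ B p_n(j) whenever i ≤ j ≤ k and p_n(j) ≤ B p_n(i) whenever k ≤ i ≤ j. Then the second-largest eigenvalue satisfies λ₁(P_n) ≤ 1 − (A/B) n^{−(q+2)}. -/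
open Finset

/-!
For an eigenfunction `f` with eigenvalue `ev`, reversibility turns the Dirichlet form into
`∑ p i P i j (f i - f j)² = 2 (1 - ev) ∑ p i (f i)²`, and unless `ev = 1` the function `f` has
`p`-mean zero, so the right side is `(1 - ev)` times twice the variance of `f`.
The variance is bounded by canonical paths: `f j - f i` telescopes along the edges `(l, l + 1)`
between `i` and `j` (Cauchy–Schwarz costs a factor `n`), and the edge `(l, l + 1)` carries the pairs
of total weight `p [0, l] · p (l, n)`. The side of this cut away from the mode has mass at most
`n B p l` or `n B p (l + 1)` by unimodality, and the conductance `p l P l (l + 1)` is at least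
`A n^(-q)` times either endpoint weight. The resulting Poincaré constant is `n² B / (A n^(-q))`.
-/

section Reversible

variable {ι : Type*} [Fintype ι] {P : ι → ι → ℝ} {p : ι → ℝ}

theorem sum_sum_mul_eq_of_reversible (hP1 : ∀ i, ∑ j, P i j = 1)
    (hrev : ∀ i j, p i * P i j = p j * P j i) (g : ι → ℝ) :
    ∑ i, ∑ j, p i * P i j * g j = ∑ i, p i * g i := by
  calc ∑ i, ∑ j, p i * P i j * g j = ∑ j, ∑ i, p j * P j i * g j := by
        rw [sum_comm]; exact sum_congr rfl fun j _ => sum_congr rfl fun i _ => by rw [hrev]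
    _ = ∑ j, p j * g j := by simp [← sum_mul, ← mul_sum, hP1]

theorem eigenvalue_mul_sum_eq_of_reversible (hP1 : ∀ i, ∑ j, P i j = 1)
    (hrev : ∀ i j, p i * P i j = p j * P j i) {f : ι → ℝ} {ev : ℝ}
    (heig : ∀ i, ∑ j, P i j * f j = ev * f i) :
    ev * ∑ i, p i * f i = ∑ i, p i * f i := by
  have h := sum_sum_mul_eq_of_reversible hP1 hrev f
  simp_rw [mul_assoc (p _), ← mul_sum, heig, mul_left_comm (p _), ← mul_sum] at h
  exact h

theorem dirichlet_form_eq_of_eigen (hP1 : ∀ i, ∑ j, P i j = 1)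
    (hrev : ∀ i j, p i * P i j = p j * P j i) {f : ι → ℝ} {ev : ℝ}
    (heig : ∀ i, ∑ j, P i j * f j = ev * f i) :
    ∑ i, ∑ j, p i * P i j * (f i - f j) ^ 2 = 2 * (1 - ev) * ∑ i, p i * f i ^ 2 := by
  have hdiag : ∑ i, ∑ j, p i * P i j * f i ^ 2 = ∑ i, p i * f i ^ 2 := by
    simp [← sum_mul, ← mul_sum, hP1]
  have hcross : ∑ i, ∑ j, p i * P i j * (f i * f j) = ev * ∑ i, p i * f i ^ 2 := by
    rw [mul_sum]
    refine sum_congr rfl fun i _ => ?_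
    have hsplit : ∀ j, p i * P i j * (f i * f j) = p i * f i * (P i j * f j) :=
      fun j => by ring
    simp_rw [hsplit, ← mul_sum, heig]
    ring
  have hoff := sum_sum_mul_eq_of_reversible hP1 hrev (f · ^ 2)
  calc ∑ i, ∑ j, p i * P i j * (f i - f j) ^ 2
      = ∑ i, ∑ j, (p i * P i j * f i ^ 2 - 2 * (p i * P i j * (f i * f j))
          + p i * P i j * f j ^ 2) :=
        sum_congr rfl fun i _ => sum_congr rfl fun j _ => by ring
    _ = 2 * (1 - ev) * ∑ i, p i * f i ^ 2 := by
        simp only [sum_add_distrib, sum_sub_distrib, ← mul_sum]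
        rw [hdiag, hcross, hoff]
        ring

end Reversible

section Variance

variable {ι : Type*} [Fintype ι]

theorem sum_sum_mul_mul_sq_sub (p f : ι → ℝ) :
    ∑ i, ∑ j, p i * p j * (f i - f j) ^ 2
      = 2 * ((∑ i, p i) * ∑ i, p i * f i ^ 2 - (∑ i, p i * f i) ^ 2) := by
  have hexp : ∀ i j, p i * p j * (f i - f j) ^ 2
      = p i * f i ^ 2 * p j + p i * (p j * f j ^ 2) - 2 * (p i * f i) * (p j * f j) :=
    fun i j => by ring
  simp only [hexp, sum_add_distrib, sum_sub_distrib, ← mul_sum, ← sum_mul]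
  ring

theorem sum_sum_mul_mul_sq_sub_pos {p f : ι → ℝ} (hp : ∀ i, 0 < p i) {i j : ι}
    (hij : f i ≠ f j) : 0 < ∑ i, ∑ j, p i * p j * (f i - f j) ^ 2 := by
  have hnonneg : ∀ i j, 0 ≤ p i * p j * (f i - f j) ^ 2 := fun i j => by
    have := hp i; have := hp j; positivity
  refine sum_pos' (fun i _ => sum_nonneg fun j _ => hnonneg i j)
    ⟨i, mem_univ _, sum_pos' (fun j _ => hnonneg i j) ⟨j, mem_univ _, ?_⟩⟩
  have := hp i; have := hp j; have := sub_ne_zero.2 hij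
  positivity

end Variance

theorem sq_sub_le_mul_sum_Ico (g : ℕ → ℝ) {i j : ℕ} (hij : i ≤ j) :
    (g j - g i) ^ 2 ≤ (j - i : ℕ) * ∑ l ∈ Ico i j, (g (l + 1) - g l) ^ 2 := by
  rw [← sum_Ico_sub g hij, ← Nat.card_Ico]
  exact sq_sum_le_card_mul_sum_sq

theorem sq_sub_le_sum_Ico_add_sum_Ico (g : ℕ → ℝ) {N i j : ℕ} (hi : i ≤ N) (hj : j ≤ N) :
    (g i - g j) ^ 2 ≤ N * (∑ l ∈ Ico i j, (g (l + 1) - g l) ^ 2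
      + ∑ l ∈ Ico j i, (g (l + 1) - g l) ^ 2) := by
  have hN : ∀ a b : ℕ, b ≤ N → ((b - a : ℕ) : ℝ) ≤ N := fun a b hb => by
    exact_mod_cast (Nat.sub_le b a).trans hb
  rcases le_total i j with hij | hji
  · rw [Ico_eq_empty_of_le hij, sum_empty, add_zero, ← neg_sub, neg_sq]
    exact (sq_sub_le_mul_sum_Ico g hij).trans
      (mul_le_mul_of_nonneg_right (hN i j hj) (sum_nonneg fun _ _ => sq_nonneg _))
  · rw [Ico_eq_empty_of_le hji, sum_empty, zero_add]
    exact (sq_sub_le_mul_sum_Ico g hji).trans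
      (mul_le_mul_of_nonneg_right (hN j i hi) (sum_nonneg fun _ _ => sq_nonneg _))

theorem sum_sum_mul_sum_Ico (N : ℕ) (w d : ℕ → ℝ) :
    ∑ i ∈ range N, ∑ j ∈ range N, w i * w j * ∑ l ∈ Ico i j, d l
      = ∑ l ∈ range (N - 1), d l * ((∑ i ∈ range (l + 1), w i) * ∑ j ∈ Ioo l N, w j) := by
  calc ∑ i ∈ range N, ∑ j ∈ range N, w i * w j * ∑ l ∈ Ico i j, d l
      = ∑ i ∈ range N, ∑ j ∈ range N, ∑ l ∈ Ico i j, w i * w j * d l := by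
        simp only [mul_sum]
    _ = ∑ i ∈ range N, ∑ l ∈ Ico i (N - 1), ∑ j ∈ Ioo l N, w i * w j * d l :=
        sum_congr rfl fun i _ => sum_comm' fun j l => by
          simp only [mem_range, mem_Ico, mem_Ioo]; omega
    _ = ∑ l ∈ range (N - 1), ∑ i ∈ range (l + 1), ∑ j ∈ Ioo l N, w i * w j * d l :=
        sum_comm' fun i l => by simp only [mem_range, mem_Ico]; omega
    _ = ∑ l ∈ range (N - 1), d l * ((∑ i ∈ range (l + 1), w i) * ∑ j ∈ Ioo l N, w j) := by
        refine sum_congr rfl fun l _ => ?_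
        rw [sum_mul_sum]
        simp_rw [mul_sum, mul_comm (d l)]

theorem sum_sum_mul_mul_sq_sub_le_of_path (N : ℕ) (w g : ℕ → ℝ) (hw : ∀ i, 0 ≤ w i) :
    ∑ i ∈ range N, ∑ j ∈ range N, w i * w j * (g i - g j) ^ 2
      ≤ 2 * N * ∑ l ∈ range (N - 1),
          (g (l + 1) - g l) ^ 2 * ((∑ i ∈ range (l + 1), w i) * ∑ j ∈ Ioo l N, w j) := by
  set d : ℕ → ℝ := fun l => (g (l + 1) - g l) ^ 2
  have hswap : ∑ i ∈ range N, ∑ j ∈ range N, w i * w j * ∑ l ∈ Ico j i, d l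
      = ∑ i ∈ range N, ∑ j ∈ range N, w i * w j * ∑ l ∈ Ico i j, d l := by
    rw [sum_comm]
    exact sum_congr rfl fun i _ => sum_congr rfl fun j _ => by rw [mul_comm (w j)]
  calc ∑ i ∈ range N, ∑ j ∈ range N, w i * w j * (g i - g j) ^ 2
      ≤ ∑ i ∈ range N, ∑ j ∈ range N,
          w i * w j * (N * (∑ l ∈ Ico i j, d l + ∑ l ∈ Ico j i, d l)) := by
        refine sum_le_sum fun i hi => sum_le_sum fun j hj => ?_
        rw [mem_range] at hi hj
        exact mul_le_mul_of_nonneg_left (sq_sub_le_sum_Ico_add_sum_Ico g hi.le hj.le)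
          (mul_nonneg (hw i) (hw j))
    _ = N * (∑ i ∈ range N, ∑ j ∈ range N, w i * w j * ∑ l ∈ Ico i j, d l
          + ∑ i ∈ range N, ∑ j ∈ range N, w i * w j * ∑ l ∈ Ico j i, d l) := by
        simp only [mul_add, sum_add_distrib, mul_sum, mul_left_comm (N : ℝ)]
    _ = 2 * N * ∑ l ∈ range (N - 1),
          d l * ((∑ i ∈ range (l + 1), w i) * ∑ j ∈ Ioo l N, w j) := by
        rw [hswap, sum_sum_mul_sum_Ico]
        ring

theorem mul_cut_le_of_unimodal {N k l : ℕ} {w : ℕ → ℝ} {a B Q : ℝ} (hw : ∀ i, 0 ≤ w i)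
    (hsum : ∑ i ∈ range N, w i ≤ 1) (ha : 0 ≤ a) (hB : 0 ≤ B)
    (hmode1 : ∀ i j, i ≤ j → j ≤ k → w i ≤ B * w j)
    (hmode2 : ∀ i j, k ≤ i → i ≤ j → j < N → w j ≤ B * w i)
    (hl : l + 1 < N) (hQl : a * w l ≤ Q) (hQr : a * w (l + 1) ≤ Q) :
    a * ((∑ i ∈ range (l + 1), w i) * ∑ j ∈ Ioo l N, w j) ≤ N * B * Q := by
  have hsub_le : ∀ s ⊆ range N, ∑ i ∈ s, w i ≤ 1 := fun s hs =>
    (sum_le_sum_of_subset_of_nonneg hs fun i _ _ => hw i).trans hsum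
  have hmass : ∀ s ⊆ range N, ∀ m, (∀ i ∈ s, w i ≤ B * w m) → ∑ i ∈ s, w i ≤ N * (B * w m) :=
    fun s hs m h => by
      have hcard : (#s : ℝ) ≤ N := by exact_mod_cast (card_le_card hs).trans (card_range N).le
      calc ∑ i ∈ s, w i ≤ #s • (B * w m) := sum_le_card_nsmul s w _ h
        _ ≤ N * (B * w m) := by
          rw [nsmul_eq_mul]; exact mul_le_mul_of_nonneg_right hcard (mul_nonneg hB (hw m))
  have hleft : range (l + 1) ⊆ range N := range_subset_range.2 hl.le
  have hright : Ioo l N ⊆ range N := fun j hj => mem_range.2 (mem_Ioo.1 hj).2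
  have hL0 : 0 ≤ ∑ i ∈ range (l + 1), w i := sum_nonneg fun i _ => hw i
  have hU0 : 0 ≤ ∑ j ∈ Ioo l N, w j := sum_nonneg fun j _ => hw j
  rcases le_or_gt (l + 1) k with hk | hk
  · have hL : ∑ i ∈ range (l + 1), w i ≤ N * (B * w (l + 1)) :=
      hmass _ hleft _ fun i hi => hmode1 i (l + 1) (mem_range.1 hi).le hk
    calc a * ((∑ i ∈ range (l + 1), w i) * ∑ j ∈ Ioo l N, w j)
        ≤ a * (N * (B * w (l + 1)) * 1) :=
          mul_le_mul_of_nonneg_left (mul_le_mul hL (hsub_le _ hright) hU0 (hL0.trans hL)) ha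
      _ = N * B * (a * w (l + 1)) := by ring
      _ ≤ N * B * Q := by gcongr
  · have hU : ∑ j ∈ Ioo l N, w j ≤ N * (B * w l) :=
      hmass _ hright _ fun j hj => by
        rw [mem_Ioo] at hj; exact hmode2 l j (by omega) hj.1.le hj.2
    calc a * ((∑ i ∈ range (l + 1), w i) * ∑ j ∈ Ioo l N, w j)
        ≤ a * (1 * (N * (B * w l))) :=
          mul_le_mul_of_nonneg_left (mul_le_mul (hsub_le _ hleft) hU hU0 zero_le_one) ha
      _ = N * B * (a * w l) := by ring
      _ ≤ N * B * Q := by gcongr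

theorem two_mul_sum_succ_le_sum_sum {N : ℕ} {T : ℕ → ℕ → ℝ} (hT : ∀ i j, 0 ≤ T i j)
    (hsymm : ∀ l, T (l + 1) l = T l (l + 1)) :
    2 * ∑ l ∈ range (N - 1), T l (l + 1) ≤ ∑ i ∈ range N, ∑ j ∈ range N, T i j := by
  set up := (range (N - 1)).image fun l => (l, l + 1)
  set down := (range (N - 1)).image fun l => (l + 1, l)
  have hdisj : Disjoint up down := by
    simp only [up, down, disjoint_left, mem_image]
    rintro _ ⟨a, -, rfl⟩ ⟨b, -, hb⟩
    simp only [Prod.mk.injEq] at hb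
    omega
  have hsub : up ∪ down ⊆ range N ×ˢ range N := by
    intro x hx
    simp only [up, down, mem_union, mem_image, mem_range] at hx
    rcases hx with ⟨a, ha, rfl⟩ | ⟨a, ha, rfl⟩ <;> simp only [mem_product, mem_range] <;> omega
  calc 2 * ∑ l ∈ range (N - 1), T l (l + 1)
      = ∑ x ∈ up ∪ down, T x.1 x.2 := by
        rw [sum_union hdisj, sum_image (by simp), sum_image (by simp)]
        simp only [hsymm, two_mul]
    _ ≤ ∑ x ∈ range N ×ˢ range N, T x.1 x.2 :=
        sum_le_sum_of_subset_of_nonneg hsub fun x _ _ => hT x.1 x.2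
    _ = ∑ i ∈ range N, ∑ j ∈ range N, T i j := sum_product _ _ _

-- Vertices are read as natural numbers through the cast `ℕ → Fin n`, which wraps modulo `n`;
-- only indices below `n` ever occur.
open Fin.NatCast

theorem Fin.sum_univ_eq_sum_range_natCast {M : Type*} [AddCommMonoid M] {n : ℕ} [NeZero n]
    (h : Fin n → M) : ∑ i, h i = ∑ i ∈ range n, h i := by
  rw [← Fin.sum_univ_eq_sum_range]; simp

theorem birth_death_mul_cut_le {n : ℕ} [NeZero n] {P : Fin n → Fin n → ℝ} {p : Fin n → ℝ}
    (hp : ∀ i, 0 ≤ p i) (hpsum : ∑ i, p i = 1) (hrev : ∀ i j, p i * P i j = p j * P j i)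
    {a B : ℝ} (ha : 0 ≤ a) (hB : 0 ≤ B) (k : Fin n)
    (hadj : ∀ i j : Fin n, (j : ℕ) = (i : ℕ) + 1 → a ≤ P i j ∧ a ≤ P j i)
    (hmode1 : ∀ i j : Fin n, i ≤ j → j ≤ k → p i ≤ B * p j)
    (hmode2 : ∀ i j : Fin n, k ≤ i → i ≤ j → p j ≤ B * p i) {l : ℕ} (hl : l + 1 < n) :
    a * ((∑ i ∈ range (l + 1), p i) * ∑ j ∈ Ioo l n, p j) ≤ n * B * (p l * P l (l + 1 : ℕ)) := by
  have hval : ∀ {i : ℕ}, i < n → ((i : Fin n) : ℕ) = i := Fin.val_cast_of_lt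
  have hle : ∀ {i j : ℕ}, i ≤ j → j < n → (i : Fin n) ≤ j := fun hij hj => by
    rw [Fin.le_iff_val_le_val, hval hj, hval (hij.trans_lt hj)]; exact hij
  have hP := hadj l (l + 1 : ℕ) (by rw [hval hl, hval (by omega)])
  refine mul_cut_le_of_unimodal (k := k) (fun i => hp _)
    ((Fin.sum_univ_eq_sum_range_natCast p).symm.trans hpsum).le ha hB ?_ ?_ hl ?_ ?_
  · intro i j hij hjk
    exact hmode1 _ _ (hle hij (hjk.trans_lt k.isLt)) (by simpa using hle hjk k.isLt)
  · intro i j hki hij hj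
    exact hmode2 _ _ (by simpa using hle hki (hij.trans_lt hj)) (hle hij hj)
  · rw [mul_comm]; exact mul_le_mul_of_nonneg_left hP.1 (hp _)
  · rw [hrev, mul_comm]; exact mul_le_mul_of_nonneg_left hP.2 (hp _)

theorem birth_death_poincare {n : ℕ} [NeZero n] {P : Fin n → Fin n → ℝ} {p : Fin n → ℝ}
    (f : Fin n → ℝ) (hp : ∀ i, 0 ≤ p i) (hpsum : ∑ i, p i = 1) (hP0 : ∀ i j, 0 ≤ P i j)
    (hrev : ∀ i j, p i * P i j = p j * P j i) {a B : ℝ} (ha : 0 ≤ a) (hB : 0 ≤ B) (k : Fin n)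
    (hadj : ∀ i j : Fin n, (j : ℕ) = (i : ℕ) + 1 → a ≤ P i j ∧ a ≤ P j i)
    (hmode1 : ∀ i j : Fin n, i ≤ j → j ≤ k → p i ≤ B * p j)
    (hmode2 : ∀ i j : Fin n, k ≤ i → i ≤ j → p j ≤ B * p i) :
    a * ∑ i, ∑ j, p i * p j * (f i - f j) ^ 2
      ≤ n ^ 2 * B * ∑ i, ∑ j, p i * P i j * (f i - f j) ^ 2 := by
  set T : ℕ → ℕ → ℝ := fun i j => p i * P i j * (f i - f j) ^ 2
  set d : ℕ → ℝ := fun l => (f (l + 1 : ℕ) - f l) ^ 2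
  have hT : ∀ i j, 0 ≤ T i j := fun i j => mul_nonneg (mul_nonneg (hp _) (hP0 _ _)) (sq_nonneg _)
  have hsymm : ∀ l, T (l + 1) l = T l (l + 1) := fun l => by simp only [T]; rw [hrev]; ring
  simp only [Fin.sum_univ_eq_sum_range_natCast]
  calc a * ∑ i ∈ range n, ∑ j ∈ range n, p i * p j * (f i - f j) ^ 2
      ≤ a * (2 * n * ∑ l ∈ range (n - 1),
          d l * ((∑ i ∈ range (l + 1), p i) * ∑ j ∈ Ioo l n, p j)) := by
        gcongr
        exact sum_sum_mul_mul_sq_sub_le_of_path n (fun i => p i) (fun i => f i) (fun i => hp i)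
    _ = 2 * n * ∑ l ∈ range (n - 1),
          d l * (a * ((∑ i ∈ range (l + 1), p i) * ∑ j ∈ Ioo l n, p j)) := by
        rw [mul_left_comm, mul_sum]
        exact congrArg _ (sum_congr rfl fun l _ => mul_left_comm _ _ _)
    _ ≤ 2 * n * ∑ l ∈ range (n - 1), d l * (n * B * (p l * P l (l + 1 : ℕ))) := by
        refine mul_le_mul_of_nonneg_left (sum_le_sum fun l hl => ?_) (by positivity)
        have hl : l + 1 < n := by rw [mem_range] at hl; omega
        exact mul_le_mul_of_nonneg_left
          (birth_death_mul_cut_le hp hpsum hrev ha hB k hadj hmode1 hmode2 hl) (sq_nonneg _)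
    _ = n ^ 2 * B * (2 * ∑ l ∈ range (n - 1), T l (l + 1)) := by
        simp only [mul_sum]
        exact sum_congr rfl fun l _ => by simp only [T, d]; ring
    _ ≤ n ^ 2 * B * ∑ i ∈ range n, ∑ j ∈ range n, T i j := by
        gcongr
        exact two_mul_sum_succ_le_sum_sum hT hsymm

theorem birth_death_second_eigenvalue_general (n : ℕ)
    (P : Fin n → Fin n → ℝ) (p : Fin n → ℝ)
    (hp : ∀ i, 0 < p i) (hpsum : ∑ i, p i = 1)
    (hP0 : ∀ i j, 0 ≤ P i j) (hP1 : ∀ i, ∑ j, P i j = 1)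
    (hrev : ∀ i j, p i * P i j = p j * P j i)
    (A B q : ℝ) (hA : 0 < A) (hB : 0 < B) (k : Fin n)
    (hnb : ∀ i j : Fin n, (j : ℕ) = (i : ℕ) + 1 →
        A * (n : ℝ) ^ (-q) ≤ P i j ∧ A * (n : ℝ) ^ (-q) ≤ P j i)
    (hmode1 : ∀ i j : Fin n, i ≤ j → j ≤ k → p i ≤ B * p j)
    (hmode2 : ∀ i j : Fin n, k ≤ i → i ≤ j → p j ≤ B * p i) :
    ∀ (ev : ℝ) (f : Fin n → ℝ),
      (∀ i, ∑ j, P i j * f j = ev * f i) → (∃ i j, f i ≠ f j) →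
      ev ≤ 1 - (A / B) * (n : ℝ) ^ (-(q + 2)) := by
  intro ev f heig ⟨i, j, hij⟩
  have : NeZero n := NeZero.of_pos i.pos
  have hn : (0 : ℝ) < n := by exact_mod_cast i.pos
  have ha : 0 < A * (n : ℝ) ^ (-q) := mul_pos hA (Real.rpow_pos_of_pos hn _)
  have hgap := birth_death_poincare f (fun i => (hp i).le) hpsum hP0 hrev ha.le hB.le k hnb
    hmode1 hmode2
  have hvar := sum_sum_mul_mul_sq_sub_pos hp hij
  have hmean := eigenvalue_mul_sum_eq_of_reversible hP1 hrev heig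
  rw [sum_sum_mul_mul_sq_sub, hpsum, one_mul] at hgap hvar
  rw [dirichlet_form_eq_of_eigen hP1 hrev heig] at hgap
  set S := ∑ i, p i * f i ^ 2
  set M := ∑ i, p i * f i
  have hS : 0 < S := by linarith [sq_nonneg M]
  have hev : ev < 1 := by
    by_contra! h
    have : (n : ℝ) ^ 2 * B * (2 * (1 - ev) * S) ≤ 0 :=
      mul_nonpos_of_nonneg_of_nonpos (by positivity) (by nlinarith)
    linarith [mul_pos ha hvar]
  have hM : M = 0 := eq_zero_of_mul_eq_self_left hev.ne hmean
  rw [hM] at hgap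
  have hgap1 : A * (n : ℝ) ^ (-q) ≤ n ^ 2 * B * (1 - ev) := by nlinarith
  have hpow : (n : ℝ) ^ (-(q + 2)) = (n : ℝ) ^ (-q) / n ^ 2 := by
    rw [neg_add, Real.rpow_add hn, Real.rpow_neg hn.le 2, Real.rpow_two, div_eq_mul_inv]
  rw [hpow, div_mul_div_comm, le_sub_comm, div_le_iff₀ (by positivity)]
  linarith

/-- birth-and-death chain on `{1,…,n}` (here indexed by `Fin n`),
reversible w.r.t. `p`, with nearest-neighbour transitions bounded below by `A n^{-q}`
and stationary distribution `B`-unimodal with mode `k`: then every eigenvalue with a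
nonconstant eigenfunction (i.e. the second-largest eigenvalue λ₁) is at most
`1 - (A/B) n^{-(q+2)}`. -/
theorem birth_death_second_eigenvalue (n : ℕ) (hn : 2 ≤ n)
    (P : Fin n → Fin n → ℝ) (p : Fin n → ℝ)
    (hp : ∀ i, 0 < p i) (hpsum : ∑ i, p i = 1)
    (hP0 : ∀ i j, 0 ≤ P i j) (hP1 : ∀ i, ∑ j, P i j = 1)
    (hrev : ∀ i j, p i * P i j = p j * P j i)
    (hbd : ∀ i j : Fin n, ((i : ℕ) + 1 < (j : ℕ) ∨ (j : ℕ) + 1 < (i : ℕ)) → P i j = 0)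
    (A B q : ℝ) (hA : 0 < A) (hB : 0 < B) (hq : 0 < q) (k : Fin n)
    (hnb : ∀ i j : Fin n, (j : ℕ) = (i : ℕ) + 1 →
        A * (n : ℝ) ^ (-q) ≤ P i j ∧ A * (n : ℝ) ^ (-q) ≤ P j i)
    (hmode1 : ∀ i j : Fin n, i ≤ j → j ≤ k → p i ≤ B * p j)
    (hmode2 : ∀ i j : Fin n, k ≤ i → i ≤ j → p j ≤ B * p i) :
    ∀ (ev : ℝ) (f : Fin n → ℝ),
      (∀ i, ∑ j, P i j * f j = ev * f i) → (∃ i j, f i ≠ f j) →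
      ev ≤ 1 - (A / B) * (n : ℝ) ^ (-(q + 2)) :=
  birth_death_second_eigenvalue_general n P p hp hpsum hP0 hP1 hrev A B q hA hB k hnb hmode1 hmode2
end

section
/- Fix 0 < β < 1 and let q_N(i) = C(N,(N−i)/2) exp(β i²/(2N)) for even i in {0,...,N}. Then there exists N₀ such that for all even N ≥ N₀, q_N is non-increasing: q_N(i) ≤ q_N(j) whenever j ≤ i (both even in {0,...,N}). -/
/-!
Put `N = i + 2k + 2`. Then `q_N(i+2) / q_N(i) = (k+1)/(N-k) · exp(2β(i+1)/N)`. Once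
`β(N+1) ≤ N`, the exponent is at most `2x` with `x = (i+1)/(N+1)`, while
`(N-k)/(k+1) = (1+x)/(1-x) = exp(2 artanh x) ≥ exp(2x)`; so each step of two decreases `q_N`.
-/

/-- `q_N(i) = C(N,(N-i)/2) exp(β i²/(2N))`. -/
noncomputable def qIsing (β : ℝ) (N i : ℕ) : ℝ :=
  (N.choose ((N - i) / 2) : ℝ) * Real.exp (β * (i : ℝ) ^ 2 / (2 * N))

open Real

lemma two_div_two_mul_add_one_le_log_one_add_inv {a : ℝ} (ha : 0 < a) :
    2 / (2 * a + 1) ≤ log (1 + a⁻¹) := by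
  simpa [div_eq_mul_inv] using le_hasSum (hasSum_log_one_add_inv ha) 0 fun k _ ↦ by positivity

lemma exp_two_mul_div_add_two_mul_mul_le {u v : ℝ} (hu : 0 < u) (hv : 0 < v) :
    exp (2 * u / (u + 2 * v)) * v ≤ u + v := by
  have hlog := two_div_two_mul_add_one_le_log_one_add_inv (div_pos hv hu)
  rw [show 2 / (2 * (v / u) + 1) = 2 * u / (u + 2 * v) by field_simp; ring,
    show 1 + (v / u)⁻¹ = (u + v) / v by field_simp; ring] at hlog
  rw [← le_div_iff₀ hv, ← exp_log (by positivity : 0 < (u + v) / v)]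
  exact exp_le_exp.mpr hlog

lemma qIsing_add_two_le {β : ℝ} {N i k : ℕ} (hβN : β * (N + 1) ≤ N)
    (hN : N = i + 2 * k + 2) : qIsing β N (i + 2) ≤ qIsing β N i := by
  have hNpos : (0 : ℝ) < N := by rw [hN]; positivity
  have hchoose : (N.choose (k + 1) : ℝ) * (k + 1) = N.choose k * (i + k + 2) := by
    have := Nat.choose_succ_right_eq N k
    rw [show N - k = i + k + 2 by omega] at this
    exact_mod_cast this
  have hsplit : exp (β * ((i + 2 : ℕ) : ℝ) ^ 2 / (2 * N)) =
      exp (β * (i : ℝ) ^ 2 / (2 * N)) * exp (2 * β * (i + 1) / N) := by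
    rw [← exp_add]; congr 1; push_cast; field_simp; ring
  have hβexp : 2 * β * (i + 1) / N ≤ 2 * ((i : ℝ) + 1) / ((i + 1) + 2 * (k + 1)) := by
    have hN' : ((i : ℝ) + 1) + 2 * (k + 1) = N + 1 := by rw [hN]; push_cast; ring
    rw [hN', div_le_div_iff₀ hNpos (by positivity)]
    nlinarith [mul_le_mul_of_nonneg_left hβN (by positivity : (0 : ℝ) ≤ 2 * (i + 1))]
  have hratio : exp (2 * β * (i + 1) / N) * (k + 1) ≤ i + k + 2 :=
    calc exp (2 * β * (i + 1) / N) * (k + 1)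
        ≤ exp (2 * ((i : ℝ) + 1) / ((i + 1) + 2 * (k + 1))) * (k + 1) := by gcongr
      _ ≤ (i + 1) + (k + 1) := exp_two_mul_div_add_two_mul_mul_le (by positivity) (by positivity)
      _ = i + k + 2 := by ring
  have hchoose_le : (N.choose k : ℝ) * exp (2 * β * (i + 1) / N) ≤ N.choose (k + 1) := by
    rw [← mul_le_mul_iff_left₀ (by positivity : (0 : ℝ) < k + 1), hchoose, mul_assoc]
    gcongr
  unfold qIsing
  rw [show (N - (i + 2)) / 2 = k by omega, show (N - i) / 2 = k + 1 by omega, hsplit,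
    ← mul_assoc, mul_right_comm]
  exact mul_le_mul_of_nonneg_right hchoose_le (exp_pos _).le

lemma monotone_qIsing_sub_two_mul {β : ℝ} {N : ℕ} (hβN : β * (N + 1) ≤ N) (hN : Even N) :
    Monotone fun n ↦ qIsing β N (N - 2 * n) := by
  refine monotone_nat_of_le_succ fun n ↦ ?_
  obtain hn | hn := le_or_gt (2 * n + 2) N
  · have h := qIsing_add_two_le (i := N - 2 * (n + 1)) (k := n) hβN (by omega)
    rwa [show N - 2 * (n + 1) + 2 = N - 2 * n by omega] at h
  · obtain ⟨c, rfl⟩ := hN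
    rw [show c + c - 2 * n = c + c - 2 * (n + 1) by omega]

theorem qIsing_decreasing_general (β : ℝ) (hβ1 : β < 1) :
    ∃ N₀ : ℕ, ∀ N : ℕ, N₀ ≤ N → Even N →
      ∀ i j : ℕ, Even i → Even j → i ≤ N → j ≤ N → j ≤ i →
        qIsing β N i ≤ qIsing β N j := by
  refine ⟨⌈β / (1 - β)⌉₊, fun N hN hNe i j hi hj hiN hjN hji ↦ ?_⟩
  have hβN : β * (N + 1) ≤ N := by
    have h := Nat.ceil_le.mp hN
    rw [div_le_iff₀ (by linarith)] at h
    linarith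
  have hmono := monotone_qIsing_sub_two_mul hβN hNe
  obtain ⟨c, rfl⟩ := hNe
  obtain ⟨p, rfl⟩ := hi
  obtain ⟨r, rfl⟩ := hj
  have h : qIsing β (c + c) (c + c - 2 * (c - p)) ≤ qIsing β (c + c) (c + c - 2 * (c - r)) :=
    hmono (by omega)
  rwa [show c + c - 2 * (c - p) = p + p by omega, show c + c - 2 * (c - r) = r + r by omega] at h

/-- for `0 < β < 1` there is `N₀` such that for all even `N ≥ N₀` the
function `q_N` is non-increasing on even indices of `{0,…,N}`. -/
theorem qIsing_decreasing (β : ℝ) (hβ0 : 0 < β) (hβ1 : β < 1) :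
    ∃ N₀ : ℕ, ∀ N : ℕ, N₀ ≤ N → Even N →
      ∀ i j : ℕ, Even i → Even j → i ≤ N → j ≤ N → j ≤ i →
        qIsing β N i ≤ qIsing β N j :=
  qIsing_decreasing_general β hβ1
end

section
/- Fix β ≥ 1 and let q_N(i) = C(N,(N−i)/2) exp(β i²/(2N)) for even i in {0,...,N}. Then there exists N₀ such that for every even N ≥ N₀ there is an even integer k_N with: q_N(i) ≤ q_N(j) whenever i ≤ j ≤ k_N, and q_N(i) ≥ q_N(j) whenever k_N ≤ i ≤ j (all indices even). That is, q_N is unimodal with mode k_N. -/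
noncomputable def isingRatio (β : ℝ) (M t : ℕ) : ℝ :=
  ((M : ℝ) - t) / (M + t + 1) * Real.exp (β * (2 * t + 1) / M)

lemma qIsing_pos (β : ℝ) (N i : ℕ) : 0 < qIsing β N i := by
  refine mul_pos ?_ (Real.exp_pos _)
  exact_mod_cast Nat.choose_pos ((Nat.div_le_self _ _).trans (Nat.sub_le _ _))

lemma choose_two_mul_sub_succ {M t : ℕ} (ht : t < M) :
    ((2 * M).choose (M - (t + 1)) : ℝ) =
      (2 * M).choose (M - t) * (((M : ℝ) - t) / (M + t + 1)) := by
  have h := Nat.choose_succ_right_eq (2 * M) (M - (t + 1))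
  rw [show M - (t + 1) + 1 = M - t by omega, show 2 * M - (M - (t + 1)) = M + t + 1 by omega] at h
  have h' : ((2 * M).choose (M - (t + 1)) : ℝ) * (M + t + 1) =
      (2 * M).choose (M - t) * ((M : ℝ) - t) := by
    rw [← Nat.cast_sub ht.le]; exact_mod_cast h.symm
  rw [mul_div_assoc', eq_div_iff (by positivity), h']

lemma qIsing_two_mul_succ (β : ℝ) {M t : ℕ} (ht : t < M) :
    qIsing β (2 * M) (2 * (t + 1)) = qIsing β (2 * M) (2 * t) * isingRatio β M t := by
  have hexp : β * ((2 * (t + 1) : ℕ) : ℝ) ^ 2 / (2 * ((2 * M : ℕ) : ℝ)) =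
      β * ((2 * t : ℕ) : ℝ) ^ 2 / (2 * ((2 * M : ℕ) : ℝ)) + β * (2 * t + 1) / M := by
    push_cast; ring
  unfold qIsing isingRatio
  rw [show (2 * M - 2 * (t + 1)) / 2 = M - (t + 1) by omega,
    show (2 * M - 2 * t) / 2 = M - t by omega, hexp, Real.exp_add, choose_two_mul_sub_succ ht]
  ring

lemma isingRatio_pos (β : ℝ) {M t : ℕ} (ht : t < M) : 0 < isingRatio β M t := by
  have : (t : ℝ) < M := by exact_mod_cast ht
  exact mul_pos (div_pos (by linarith) (by positivity)) (Real.exp_pos _)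

lemma one_le_isingRatio_zero {β : ℝ} (hβ : 1 ≤ β) {M : ℕ} (hM : 0 < M) :
    1 ≤ isingRatio β M 0 := by
  have hM' : (0 : ℝ) < M := by exact_mod_cast hM
  unfold isingRatio
  simp only [Nat.cast_zero, sub_zero, add_zero, mul_zero, zero_add, mul_one]
  calc (1 : ℝ) = M / (M + 1) * (1 / M + 1) := by field_simp; ring
    _ ≤ M / (M + 1) * (β / M + 1) := by gcongr
    _ ≤ M / (M + 1) * Real.exp (β / M) := by gcongr; exact Real.add_one_le_exp _

lemma isingRatio_mul_le_sq (β : ℝ) (M t : ℕ) :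
    isingRatio β M (t + 2) * isingRatio β M t ≤ isingRatio β M (t + 1) ^ 2 := by
  have hfrac : ((M : ℝ) - (t + 2)) / (M + (t + 2) + 1) * (((M : ℝ) - t) / (M + t + 1)) ≤
      (((M : ℝ) - (t + 1)) / (M + (t + 1) + 1)) ^ 2 := by
    -- with `a = M - t - 1`, `b = M + t + 2` this is `(a² - 1) b² ≤ a² (b² - 1)`, i.e. `a² ≤ b²`
    rw [div_mul_div_comm, div_pow, div_le_div_iff₀ (by positivity) (by positivity)]
    nlinarith [sq_nonneg ((M : ℝ) - t - 1), sq_nonneg ((M : ℝ) + t + 2)]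
  have hexp : Real.exp (β * (2 * (t + 2 : ℝ) + 1) / M) * Real.exp (β * (2 * t + 1) / M) =
      Real.exp (β * (2 * (t + 1 : ℝ) + 1) / M) ^ 2 := by
    rw [← Real.exp_add, sq, ← Real.exp_add]; congr 1; ring
  unfold isingRatio
  push_cast
  calc _ = (((M : ℝ) - (t + 2)) / (M + (t + 2) + 1) * (((M : ℝ) - t) / (M + t + 1))) *
        (Real.exp (β * (2 * (t + 2 : ℝ) + 1) / M) * Real.exp (β * (2 * t + 1) / M)) := by ring
    _ ≤ (((M : ℝ) - (t + 1)) / (M + (t + 1) + 1)) ^ 2 *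
        (Real.exp (β * (2 * (t + 2 : ℝ) + 1) / M) * Real.exp (β * (2 * t + 1) / M)) := by
      gcongr
    _ = _ := by rw [hexp]; ring

section RatioSequence

variable {ρ : ℕ → ℝ} {n : ℕ}

lemma le_of_lt_one_of_mul_le_sq (hpos : ∀ t < n, 0 < ρ t) (h0 : 1 ≤ ρ 0)
    (hconc : ∀ t, t + 2 < n → ρ (t + 2) * ρ t ≤ ρ (t + 1) ^ 2) :
    ∀ t, t + 1 < n → ρ t < 1 → ρ (t + 1) ≤ ρ t := by
  intro t
  induction t with
  | zero => intro _ h; linarith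
  | succ t ih =>
    intro ht hlt
    have hprev : ρ (t + 1) ≤ ρ t := by
      by_cases h : ρ t < 1
      · exact ih (by omega) h
      · linarith
    have hpos_t := hpos t (by omega)
    have hpos_t1 := hpos (t + 1) (by omega)
    refine le_of_mul_le_mul_right ?_ hpos_t
    calc ρ (t + 2) * ρ t ≤ ρ (t + 1) ^ 2 := hconc t ht
      _ ≤ ρ (t + 1) * ρ t := by rw [sq]; gcongr

lemma lt_one_of_le_of_mul_le_sq (hpos : ∀ t < n, 0 < ρ t) (h0 : 1 ≤ ρ 0)
    (hconc : ∀ t, t + 2 < n → ρ (t + 2) * ρ t ≤ ρ (t + 1) ^ 2) {k : ℕ} (hk : ρ k < 1) :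
    ∀ t, k ≤ t → t < n → ρ t < 1 := by
  intro t hkt
  induction t, hkt using Nat.le_induction with
  | base => exact fun _ ↦ hk
  | succ t hkt ih =>
    intro ht
    have h := ih (by omega)
    exact (le_of_lt_one_of_mul_le_sq hpos h0 hconc t ht h).trans_lt h

theorem exists_monotoneOn_antitoneOn_of_ratio {f : ℕ → ℝ} (hf : ∀ t < n, 0 ≤ f t)
    (hstep : ∀ t < n, f (t + 1) = f t * ρ t) (hpos : ∀ t < n, 0 < ρ t) (h0 : 1 ≤ ρ 0)
    (hconc : ∀ t, t + 2 < n → ρ (t + 2) * ρ t ≤ ρ (t + 1) ^ 2) :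
    ∃ k ≤ n, MonotoneOn f (Set.Iic k) ∧ AntitoneOn f (Set.Icc k n) := by
  classical
  have hex : ∃ k, n ≤ k ∨ ρ k < 1 := ⟨n, .inl le_rfl⟩
  set k := Nat.find hex
  have hkn : k ≤ n := Nat.find_min' hex (.inl le_rfl)
  have hup : ∀ t < k, 1 ≤ ρ t := fun t ht ↦ by
    simpa using (not_or.mp (Nat.find_min hex ht)).2
  have hdown : ∀ t, k ≤ t → t < n → ρ t < 1 := by
    rcases Nat.find_spec hex with h | h
    · intro t hkt ht; omega
    · exact lt_one_of_le_of_mul_le_sq hpos h0 hconc h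
  refine ⟨k, hkn, monotoneOn_of_le_add_one Set.ordConnected_Iic ?_,
    antitoneOn_of_add_one_le Set.ordConnected_Icc ?_⟩
  · intro t _ _ ht1
    have htk : t < k := Set.mem_Iic.mp ht1
    rw [hstep t (by omega)]
    exact le_mul_of_one_le_right (hf t (by omega)) (hup t htk)
  · intro t _ ht ht1
    have htn : t < n := by simp only [Set.mem_Icc] at ht1; omega
    rw [hstep t htn]
    exact mul_le_of_le_one_right (hf t htn) (hdown t ht.1 htn).le

end RatioSequence

/-- for `β ≥ 1` there is `N₀` such that for every even `N ≥ N₀` the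
function `q_N` on even indices of `{0,…,N}` is unimodal: non-decreasing up to some
(even) mode `k_N` and non-increasing afterwards. -/
theorem qIsing_unimodal (β : ℝ) (hβ : 1 ≤ β) :
    ∃ N₀ : ℕ, ∀ N : ℕ, N₀ ≤ N → Even N →
      ∃ k : ℕ, Even k ∧ k ≤ N ∧
        (∀ i j : ℕ, Even i → Even j → i ≤ j → j ≤ k → qIsing β N i ≤ qIsing β N j) ∧
        (∀ i j : ℕ, Even i → Even j → k ≤ i → i ≤ j → j ≤ N →
          qIsing β N j ≤ qIsing β N i) := by
  refine ⟨1, fun N hN hNe ↦ ?_⟩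
  obtain ⟨M, rfl⟩ := hNe.two_dvd
  obtain ⟨k, hkM, hmono, hanti⟩ :=
    exists_monotoneOn_antitoneOn_of_ratio (f := fun t ↦ qIsing β (2 * M) (2 * t))
      (fun _ _ ↦ (qIsing_pos β _ _).le) (fun _ ht ↦ qIsing_two_mul_succ β ht)
      (fun _ ht ↦ isingRatio_pos β ht) (one_le_isingRatio_zero hβ (by omega))
      (fun t _ ↦ isingRatio_mul_le_sq β M t)
  refine ⟨2 * k, even_two_mul k, by omega, ?_, ?_⟩
  · intro i j hi hj hij hjk
    obtain ⟨a, rfl⟩ := hi.two_dvd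
    obtain ⟨b, rfl⟩ := hj.two_dvd
    exact hmono (Set.mem_Iic.mpr (by omega)) (Set.mem_Iic.mpr (by omega)) (by omega)
  · intro i j hi hj hki hij hjN
    obtain ⟨a, rfl⟩ := hi.two_dvd
    obtain ⟨b, rfl⟩ := hj.two_dvd
    exact hanti ⟨by omega, by omega⟩ ⟨by omega, by omega⟩ (by omega)
end
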